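/- arXiv:2305.08739 — 3 statements merged into one kernel-verified Lean document; each statement's English description precedes it below -/
import Mathlib

section
/- Let a be a unit vector and n₁, n₂ unit vectors orthogonal to a, and let r be a unit vector with r^⊥ = r - (r·a)a ≠ 0. Write rᵢ = r - 2(r·nᵢ)nᵢ and rᵢ^⊥ = rᵢ - (rᵢ·a)a. Then the cosine of the angle between r₁^⊥ and r₂^⊥ equals cos(2θ), where θ is the angle between n₁ and n₂; i.e., the rotation of the reflected beam is twice the rotation of the mirror. -/
open Matrix

/-- Euclidean norm on `Fin 3 → ℝ`. -/
noncomputable def en (v : Fin 3 → ℝ) : ℝ := Real.sqrt (v ⬝ᵥ v)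

lemma en_one_dot {v : Fin 3 → ℝ} (h : en v = 1) : v ⬝ᵥ v = 1 := by
  have h0 : 0 ≤ v ⬝ᵥ v := Finset.sum_nonneg fun i _ => mul_self_nonneg _
  have := Real.sq_sqrt h0
  rw [show Real.sqrt (v ⬝ᵥ v) = 1 from h] at this
  linarith [this]

lemma gram_sq (u v w : Fin 3 → ℝ) :
    (Matrix.det (Matrix.of ![u, v, w]))^2 =
      (u ⬝ᵥ u) * ((v ⬝ᵥ v) * (w ⬝ᵥ w) - (v ⬝ᵥ w)^2)
      - (u ⬝ᵥ v) * ((u ⬝ᵥ v) * (w ⬝ᵥ w) - (v ⬝ᵥ w) * (u ⬝ᵥ w))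
      + (u ⬝ᵥ w) * ((u ⬝ᵥ v) * (v ⬝ᵥ w) - (v ⬝ᵥ v) * (u ⬝ᵥ w)) := by
  simp [Matrix.det_fin_three, dotProduct, Fin.sum_univ_three]
  ring

set_option maxHeartbeats 1000000 in
/-- The rotation of the reflected beam is twice the rotation of the mirror:
the cosine of the angle between the projected reflected directions equals
`cos (2θ)` where `θ` is the angle between the mirror normals. -/
theorem reflected_angle_doubles (a n₁ n₂ r : Fin 3 → ℝ)
    (ha : en a = 1) (hn₁ : en n₁ = 1) (hn₂ : en n₂ = 1)
    (hna₁ : n₁ ⬝ᵥ a = 0) (hna₂ : n₂ ⬝ᵥ a = 0) (hr : en r = 1)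
    (hperp : r - ((r ⬝ᵥ a) • a) ≠ 0)
    (r₁ r₂ p₁ p₂ : Fin 3 → ℝ)
    (hr₁ : r₁ = r - (2 * (r ⬝ᵥ n₁)) • n₁)
    (hr₂ : r₂ = r - (2 * (r ⬝ᵥ n₂)) • n₂)
    (hp₁ : p₁ = r₁ - ((r₁ ⬝ᵥ a) • a))
    (hp₂ : p₂ = r₂ - ((r₂ ⬝ᵥ a) • a)) :
    (p₁ ⬝ᵥ p₂) / (en p₁ * en p₂) = Real.cos (2 * Real.arccos (n₁ ⬝ᵥ n₂)) := by
  have haa : a ⬝ᵥ a = 1 := en_one_dot ha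
  have hn₁n₁ : n₁ ⬝ᵥ n₁ = 1 := en_one_dot hn₁
  have hn₂n₂ : n₂ ⬝ᵥ n₂ = 1 := en_one_dot hn₂
  set q : Fin 3 → ℝ := r - ((r ⬝ᵥ a) • a) with hq
  set t : ℝ := n₁ ⬝ᵥ n₂ with ht
  set α : ℝ := r ⬝ᵥ n₁ with hα
  set β : ℝ := r ⬝ᵥ n₂ with hβ
  have han₁ : a ⬝ᵥ n₁ = 0 := by rw [dotProduct_comm]; exact hna₁
  have han₂ : a ⬝ᵥ n₂ = 0 := by rw [dotProduct_comm]; exact hna₂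
  have hqa : q ⬝ᵥ a = 0 := by
    simp [hq, sub_dotProduct, smul_dotProduct, haa]
  have hqn₁ : q ⬝ᵥ n₁ = α := by
    simp [hq, sub_dotProduct, smul_dotProduct, han₁, hα]
  have hqn₂ : q ⬝ᵥ n₂ = β := by
    simp [hq, sub_dotProduct, smul_dotProduct, han₂, hβ]
  -- p_i = q - 2(r·n_i) n_i
  have hp₁' : p₁ = q - (2 * α) • n₁ := by
    rw [hp₁, hr₁, hq]
    have : (r - (2 * (r ⬝ᵥ n₁)) • n₁) ⬝ᵥ a = r ⬝ᵥ a := by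
      simp [sub_dotProduct, smul_dotProduct, hna₁]
    rw [this, hα]
    abel
  have hp₂' : p₂ = q - (2 * β) • n₂ := by
    rw [hp₂, hr₂, hq]
    have : (r - (2 * (r ⬝ᵥ n₂)) • n₂) ⬝ᵥ a = r ⬝ᵥ a := by
      simp [sub_dotProduct, smul_dotProduct, hna₂]
    rw [this, hβ]
    abel
  set Q : ℝ := q ⬝ᵥ q with hQ
  have hQpos : 0 < Q := by
    rcases lt_or_eq_of_le (Finset.sum_nonneg fun i _ => mul_self_nonneg (q i)) with h | h
    · exact h
    · exact absurd (dotProduct_self_eq_zero.mp h.symm) hperp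
  -- dot products of p₁, p₂
  have hp₁p₁ : p₁ ⬝ᵥ p₁ = Q := by
    rw [hp₁']
    simp only [sub_dotProduct, dotProduct_sub, smul_dotProduct,
      dotProduct_smul, smul_eq_mul, hqn₁, hn₁n₁]
    rw [dotProduct_comm n₁ q, hqn₁]
    ring_nf
    exact hQ.symm
  have hp₂p₂ : p₂ ⬝ᵥ p₂ = Q := by
    rw [hp₂']
    simp only [sub_dotProduct, dotProduct_sub, smul_dotProduct,
      dotProduct_smul, smul_eq_mul, hqn₂, hn₂n₂]
    rw [dotProduct_comm n₂ q, hqn₂]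
    ring_nf
    exact hQ.symm
  have hp₁p₂ : p₁ ⬝ᵥ p₂ = Q - 2*α^2 - 2*β^2 + 4*α*β*t := by
    rw [hp₁', hp₂']
    simp only [sub_dotProduct, dotProduct_sub, smul_dotProduct,
      dotProduct_smul, smul_eq_mul, hqn₂]
    rw [dotProduct_comm n₁ q, hqn₁, ht, ← hQ]
    ring
  -- key identity from linear dependence
  have hdet : Matrix.det (Matrix.of ![n₁, n₂, q]) = 0 := by
    have hane : a ≠ 0 := by
      intro h
      rw [h] at haa
      simp [dotProduct] at haa
    apply Matrix.exists_mulVec_eq_zero_iff.mp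
    refine ⟨a, hane, ?_⟩
    funext i
    fin_cases i <;>
      simp [Matrix.mulVec, hna₁, hna₂, hqa]
  have hn₁q : n₁ ⬝ᵥ q = α := by rw [dotProduct_comm]; exact hqn₁
  have hn₂q : n₂ ⬝ᵥ q = β := by rw [dotProduct_comm]; exact hqn₂
  have key : Q * (1 - t^2) = α^2 + β^2 - 2*α*β*t := by
    have h := gram_sq n₁ n₂ q
    rw [hdet, hn₁n₁, hn₂n₂, hn₁q, hn₂q, ← ht, ← hQ] at h
    linear_combination -h
  -- Cauchy-Schwarz : |t| ≤ 1
  have ht2 : t^2 ≤ 1 := by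
    have h := Finset.sum_mul_sq_le_sq_mul_sq Finset.univ n₁ n₂
    have e1 : (∑ i, n₁ i ^ 2) = 1 := by
      have := hn₁n₁; simpa [dotProduct, sq] using this
    have e2 : (∑ i, n₂ i ^ 2) = 1 := by
      have := hn₂n₂; simpa [dotProduct, sq] using this
    rw [e1, e2] at h
    simpa [ht, dotProduct] using h
  have ht1 : -1 ≤ t ∧ t ≤ 1 := abs_le.mp ((sq_le_one_iff_abs_le_one _).mp ht2)
  -- right-hand side
  have hrhs : Real.cos (2 * Real.arccos t) = 2 * t^2 - 1 := by
    rw [Real.cos_two_mul, Real.cos_arccos ht1.1 ht1.2]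
  -- norms
  have henp₁ : en p₁ = Real.sqrt Q := by rw [en, hp₁p₁]
  have henp₂ : en p₂ = Real.sqrt Q := by rw [en, hp₂p₂]
  rw [hp₁p₂, henp₁, henp₂, Real.mul_self_sqrt hQpos.le, hrhs]
  have hQne : Q ≠ 0 := ne_of_gt hQpos
  field_simp
  linear_combination 2 * key
end

section
/- Let a be a unit vector, q a nonzero vector orthogonal to a, and r a unit vector orthogonal to q. Set m = q × r and m^⊥ = m - (m·a)a. Then m^⊥ is parallel to r^⊥ = r - (r·a)a, and ‖m^⊥‖ = ‖q‖·|r·a|. -/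
open Matrix

/-- The projected moment `m^⊥` is parallel to the projected direction `r^⊥`,
and `‖m^⊥‖ = ‖q‖ |r·a|`. -/
theorem projected_moment_parallel (a q r : Fin 3 → ℝ)
    (ha : en a = 1) (hq : q ≠ 0) (hqa : q ⬝ᵥ a = 0)
    (hr : en r = 1) (hqr : q ⬝ᵥ r = 0)
    (m mperp rperp : Fin 3 → ℝ)
    (hm : m = crossProduct q r)
    (hmp : mperp = m - ((m ⬝ᵥ a) • a))
    (hrp : rperp = r - ((r ⬝ᵥ a) • a)) :
    crossProduct mperp rperp = 0 ∧ en mperp = en q * |r ⬝ᵥ a| := by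
  have hA : a ⬝ᵥ a = 1 := by
    have h0 : (0:ℝ) ≤ a ⬝ᵥ a := by
      simp only [dotProduct, Fin.sum_univ_three]
      nlinarith [mul_self_nonneg (a 0), mul_self_nonneg (a 1), mul_self_nonneg (a 2)]
    have h2 := Real.sq_sqrt h0
    rw [en] at ha
    nlinarith [h2]
  subst hm hmp hrp
  have hqa' : q 0 * a 0 + q 1 * a 1 + q 2 * a 2 = 0 := by
    simpa [dotProduct, Fin.sum_univ_three] using hqa
  have hqr' : q 0 * r 0 + q 1 * r 1 + q 2 * r 2 = 0 := by
    simpa [dotProduct, Fin.sum_univ_three] using hqr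
  have hA' : a 0 * a 0 + a 1 * a 1 + a 2 * a 2 = 1 := by
    simpa [dotProduct, Fin.sum_univ_three] using hA
  have hkey : (crossProduct q r - ((crossProduct q r ⬝ᵥ a) • a))
      = (-(r ⬝ᵥ a)) • (crossProduct a q) := by
    funext i; fin_cases i <;>
      simp [crossProduct, dotProduct, Fin.sum_univ_three]
    · linear_combination (a 1 * r 2 - a 2 * r 1) * hqa' - (q 1 * r 2 - q 2 * r 1) * hA'
    · linear_combination (a 2 * r 0 - a 0 * r 2) * hqa' - (q 2 * r 0 - q 0 * r 2) * hA'
    · linear_combination (a 0 * r 1 - a 1 * r 0) * hqa' - (q 0 * r 1 - q 1 * r 0) * hA'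
  rw [hkey]
  constructor
  · funext i; fin_cases i <;>
      simp [crossProduct, dotProduct, Fin.sum_univ_three]
    · linear_combination (r 0 * a 0 + r 1 * a 1 + r 2 * a 2) * (a 0) * hqr'
        - (r 0 * a 0 + r 1 * a 1 + r 2 * a 2)^2 * (a 0) * hqa'
        + (r 0 * a 0 + r 1 * a 1 + r 2 * a 2)^2 * (q 0) * hA'
    · linear_combination (r 0 * a 0 + r 1 * a 1 + r 2 * a 2) * (a 1) * hqr'
        - (r 0 * a 0 + r 1 * a 1 + r 2 * a 2)^2 * (a 1) * hqa'
        + (r 0 * a 0 + r 1 * a 1 + r 2 * a 2)^2 * (q 1) * hA'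
    · linear_combination (r 0 * a 0 + r 1 * a 1 + r 2 * a 2) * (a 2) * hqr'
        - (r 0 * a 0 + r 1 * a 1 + r 2 * a 2)^2 * (a 2) * hqa'
        + (r 0 * a 0 + r 1 * a 1 + r 2 * a 2)^2 * (q 2) * hA'
  · have hdot : ((-(r ⬝ᵥ a)) • (crossProduct a q)) ⬝ᵥ ((-(r ⬝ᵥ a)) • (crossProduct a q))
        = (q ⬝ᵥ q) * (r ⬝ᵥ a)^2 := by
      simp [crossProduct, dotProduct, Fin.sum_univ_three]
      linear_combination
        (-(r 0 * a 0 + r 1 * a 1 + r 2 * a 2)^2 * (q 0 * a 0 + q 1 * a 1 + q 2 * a 2)) * hqa'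
        + ((r 0 * a 0 + r 1 * a 1 + r 2 * a 2)^2 * (q 0 * q 0 + q 1 * q 1 + q 2 * q 2)) * hA'
    have hqq : (0:ℝ) ≤ q ⬝ᵥ q := by
      simp only [dotProduct, Fin.sum_univ_three]
      nlinarith [mul_self_nonneg (q 0), mul_self_nonneg (q 1), mul_self_nonneg (q 2)]
    rw [en, en, hdot, Real.sqrt_mul hqq, Real.sqrt_sq_eq_abs]
end

section
/- Let A, B, C, D be points on a circle in ℝ² with A, B, C affinely independent, and suppose the line AD meets the line BC at a point M = tB + (1-t)C with M = sA + (1-s)D, s ≠ 1. Then s = a²(t² - t)/((b² - c²)t - b²), where a = |BC|, b = |AC|, c = |AB| (assuming the denominator is nonzero). -/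
/-- If `A, B, C, D` are concyclic, `A, B, C` affinely independent, and the chords
`AD` and `BC` meet in `M = tB + (1-t)C = sA + (1-s)D`, then
`s = a²(t² - t)/((b² - c²)t - b²)`. -/
theorem chord_parameter (A B C D M : EuclideanSpace ℝ (Fin 2))
    (hABC : AffineIndependent ℝ ![A, B, C])
    (o : EuclideanSpace ℝ (Fin 2)) (ρ : ℝ)
    (hA : dist A o = ρ) (hB : dist B o = ρ) (hC : dist C o = ρ) (hDo : dist D o = ρ)
    (a b c : ℝ) (ha : a = dist B C) (hb : b = dist A C) (hc : c = dist A B)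
    (t s : ℝ)
    (hM₁ : M = t • B + (1 - t) • C)
    (hM₂ : M = s • A + (1 - s) • D)
    (hs1 : s ≠ 1)
    (hden : (b ^ 2 - c ^ 2) * t - b ^ 2 ≠ 0) :
    s = a ^ 2 * (t ^ 2 - t) / ((b ^ 2 - c ^ 2) * t - b ^ 2) := by
  set u := A - o with hu
  set v := B - o with hv
  set w := C - o with hw
  set d := D - o with hd
  have h0 : t • B + (1 - t) • C = s • A + (1 - s) • D := hM₁.symm.trans hM₂
  have key : t • v + (1 - t) • w = s • u + (1 - s) • d := by
    rw [hu, hv, hw, hd]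
    linear_combination (norm := module) h0
  have E1 : (inner ℝ (t • v + (1 - t) • w) (t • v + (1 - t) • w) : ℝ)
      = inner ℝ (s • u + (1 - s) • d) (s • u + (1 - s) • d) := by rw [key]
  have E2 : (inner ℝ u (t • v + (1 - t) • w) : ℝ)
      = inner ℝ u (s • u + (1 - s) • d) := by rw [key]
  simp only [inner_add_left, inner_add_right, real_inner_smul_left,
    real_inner_smul_right] at E1 E2
  have huu : (inner ℝ u u : ℝ) = ρ ^ 2 := by
    rw [real_inner_self_eq_norm_sq, hu, ← dist_eq_norm, hA]
  have hvv : (inner ℝ v v : ℝ) = ρ ^ 2 := by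
    rw [real_inner_self_eq_norm_sq, hv, ← dist_eq_norm, hB]
  have hww : (inner ℝ w w : ℝ) = ρ ^ 2 := by
    rw [real_inner_self_eq_norm_sq, hw, ← dist_eq_norm, hC]
  have hdd : (inner ℝ d d : ℝ) = ρ ^ 2 := by
    rw [real_inner_self_eq_norm_sq, hd, ← dist_eq_norm, hDo]
  have ha2 : a ^ 2 = ρ ^ 2 - 2 * inner ℝ v w + ρ ^ 2 := by
    rw [ha, dist_eq_norm, show B - C = v - w by rw [hv, hw]; abel,
      @norm_sub_sq_real, ← real_inner_self_eq_norm_sq, ← real_inner_self_eq_norm_sq,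
      hvv, hww]
  have hb2 : b ^ 2 = ρ ^ 2 - 2 * inner ℝ u w + ρ ^ 2 := by
    rw [hb, dist_eq_norm, show A - C = u - w by rw [hu, hw]; abel,
      @norm_sub_sq_real, ← real_inner_self_eq_norm_sq, ← real_inner_self_eq_norm_sq,
      huu, hww]
  have hc2 : c ^ 2 = ρ ^ 2 - 2 * inner ℝ u v + ρ ^ 2 := by
    rw [hc, dist_eq_norm, show A - B = u - v by rw [hu, hv]; abel,
      @norm_sub_sq_real, ← real_inner_self_eq_norm_sq, ← real_inner_self_eq_norm_sq,
      huu, hvv]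
  have hcomm1 : (inner ℝ w v : ℝ) = inner ℝ v w := (real_inner_comm w v).symm
  have hcomm2 : (inner ℝ d u : ℝ) = inner ℝ u d := (real_inner_comm d u).symm
  rw [hcomm1, hcomm2, huu, hvv, hww, hdd] at E1
  rw [huu] at E2
  -- derive s * P = Q
  have main : s * ((b ^ 2 - c ^ 2) * t - b ^ 2) = a ^ 2 * (t ^ 2 - t) := by
    linear_combination -E1 + 2 * s * E2 + (t - t ^ 2) * ha2
      + (s * t - s) * hb2 - s * t * hc2
  field_simp
  rw [eq_div_iff (by intro h; apply hden; linarith)]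
  linear_combination main
end
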